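/- With assumptions (A₁)–(A₅), if {u_n} ⊂ 𝒩 satisfies Φ'(u_n) → 0 and u_n → 0 in ℓ^q(ℤ^N) (for the exponent q from the growth condition), then ‖u_n‖ → 0; consequently, since every element of 𝒩 has norm at least δ > 0, Palais–Smale sequences in 𝒩 cannot converge to 0 in ℓ^q. -/

import Mathlib

open scoped BigOperators
open Filter Topology

noncomputable section

abbrev Vtx (N : ℕ) := Fin N → ℤ

def LatAdj {N : ℕ} (x y : Vtx N) : Prop := (∑ i, |x i - y i|) = 1

instance {N : ℕ} (x y : Vtx N) : Decidable (LatAdj x y) := by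
  unfold LatAdj; infer_instance

/-- `∑_x |u x|^p`. -/
noncomputable def lpSum (N : ℕ) (p : ℝ) (u : Vtx N → ℝ) : ℝ := ∑' x, |u x| ^ p

/-- `(1/2) ∑_{x∼y} |u x − u y|^p` (sum over ordered pairs of adjacent vertices). -/
noncomputable def pEnergy (N : ℕ) (p : ℝ) (u : Vtx N → ℝ) : ℝ :=
  (1/2) * ∑' z : Vtx N × Vtx N, if LatAdj z.1 z.2 then |u z.1 - u z.2| ^ p else 0

/-- `(1/2) ∑_{x∼y} |∇_{xy}u|^{p−2} (∇_{xy}u)(∇_{xy}v)`. -/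
noncomputable def gradPair (N : ℕ) (p : ℝ) (u v : Vtx N → ℝ) : ℝ :=
  (1/2) * ∑' z : Vtx N × Vtx N,
    if LatAdj z.1 z.2 then |u z.2 - u z.1| ^ (p - 2) * (u z.2 - u z.1) * (v z.2 - v z.1) else 0

/-- discrete p-Laplacian. -/
noncomputable def pLap (N : ℕ) (p : ℝ) (u : Vtx N → ℝ) (x : Vtx N) : ℝ :=
  ∑' y, if LatAdj x y then |u y - u x| ^ (p - 2) * (u y - u x) else 0

/-- `‖u‖^p` for the potential norm. -/
noncomputable def eNormP (N : ℕ) (p : ℝ) (V : Vtx N → ℝ) (u : Vtx N → ℝ) : ℝ :=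
  pEnergy N p u + ∑' x, V x * |u x| ^ p

/-- the potential norm `‖u‖`. -/
noncomputable def eNorm (N : ℕ) (p : ℝ) (V : Vtx N → ℝ) (u : Vtx N → ℝ) : ℝ :=
  (eNormP N p V u) ^ (1/p)

/-- `F(x,t) = ∫₀^t f(x,s) ds`. -/
noncomputable def Fprim {N : ℕ} (f : Vtx N → ℝ → ℝ) (x : Vtx N) (t : ℝ) : ℝ :=
  ∫ s in (0:ℝ)..t, f x s

/-- the variational functional `Φ`. -/
noncomputable def PhiFun (N : ℕ) (p : ℝ) (V : Vtx N → ℝ) (f : Vtx N → ℝ → ℝ)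
    (u : Vtx N → ℝ) : ℝ :=
  (1/p) * eNormP N p V u - ∑' x, Fprim f x (u x)

/-- `Φ'(u)v`. -/
noncomputable def PhiDeriv (N : ℕ) (p : ℝ) (V : Vtx N → ℝ) (f : Vtx N → ℝ → ℝ)
    (u v : Vtx N → ℝ) : ℝ :=
  gradPair N p u v + (∑' x, V x * |u x| ^ (p - 2) * u x * v x) - ∑' x, f x (u x) * v x

/-- membership in `E = ℓ^p`. -/
def memE (N : ℕ) (p : ℝ) (u : Vtx N → ℝ) : Prop := Summable fun x => |u x| ^ p

/-- the Nehari manifold. -/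
def Nehari (N : ℕ) (p : ℝ) (V : Vtx N → ℝ) (f : Vtx N → ℝ → ℝ) : Set (Vtx N → ℝ) :=
  {u | memE N p u ∧ u ≠ 0 ∧ PhiDeriv N p V f u u = 0}

/-!
On the Nehari manifold `‖u‖^p = ∑ f(x,u)u`. Periodicity makes `V₁ = inf V` positive, and the
growth conditions give `|f(x,t)t| ≤ (V₁/2)|t|^p + C|t|^q`; since `V₁ ∑|u|^p ≤ ‖u‖^p`, this
yields `‖u‖^p ≤ 2C ∑|u|^q` on `𝒩`. Hence `‖u_n‖ → 0` whenever `u_n → 0` in `ℓ^q`, which is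
impossible if `‖·‖ ≥ δ > 0` on `𝒩`.

The potential `V` may be unbounded, so `∑ V|u|^p < ∞` does not follow from `u ∈ ℓ^p` (and an
unsummable `tsum` is `0`). It comes from the Palais–Smale bound tested against the truncations
`1_F u`: their `ℓ^p` norms stay bounded, so `∑_F V|u|^p` is controlled by its own `p`-th root.
-/

section RealInequalities

variable {p : ℝ}

lemma rpow_sub_one_mul_self {x : ℝ} (hx : 0 ≤ x) (hp : p ≠ 0) : x ^ (p - 1) * x = x ^ p := by
  rw [← Real.rpow_add_one' hx (by simpa using hp), sub_add_cancel]

lemma abs_rpow_sub_two_mul_self_mul_self (hp : 1 < p) (t : ℝ) :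
    |t| ^ (p - 2) * t * t = |t| ^ p := by
  rw [mul_assoc, ← abs_mul_abs_self, ← mul_assoc, show p - 2 = p - 1 - 1 by ring,
    rpow_sub_one_mul_self (abs_nonneg t) (by linarith),
    rpow_sub_one_mul_self (abs_nonneg t) (by linarith)]

lemma abs_abs_rpow_sub_two_mul (hp : 1 < p) (t : ℝ) : |(|t| ^ (p - 2) * t)| = |t| ^ (p - 1) := by
  rw [abs_mul, abs_of_nonneg (by positivity), show p - 2 = p - 1 - 1 by ring,
    rpow_sub_one_mul_self (abs_nonneg t) (by linarith)]

lemma rpow_max_le_add {a b : ℝ} (hp : 0 ≤ p) (ha : 0 ≤ a) (hb : 0 ≤ b) :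
    max a b ^ p ≤ a ^ p + b ^ p := by
  rw [Real.rpow_max ha hb hp]
  exact max_le_add_of_nonneg (by positivity) (by positivity)

lemma rpow_sub_one_mul_le_add (hp : 1 < p) {a b : ℝ} (ha : 0 ≤ a) (hb : 0 ≤ b) :
    a ^ (p - 1) * b ≤ a ^ p + b ^ p :=
  calc a ^ (p - 1) * b ≤ max a b ^ (p - 1) * max a b :=
        mul_le_mul (Real.rpow_le_rpow ha (le_max_left a b) (by linarith)) (le_max_right a b) hb
          (by positivity)
    _ = max a b ^ p := rpow_sub_one_mul_self (le_max_of_le_left ha) (by linarith)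
    _ ≤ a ^ p + b ^ p := rpow_max_le_add (by linarith) ha hb

lemma abs_sub_rpow_le (hp : 0 ≤ p) (a b : ℝ) : |a - b| ^ p ≤ 2 ^ p * (|a| ^ p + |b| ^ p) :=
  calc |a - b| ^ p ≤ (2 * max |a| |b|) ^ p := by
        gcongr
        calc |a - b| ≤ |a| + |b| := abs_sub a b
          _ ≤ 2 * max |a| |b| := by
            rw [two_mul]; exact add_le_add (le_max_left _ _) (le_max_right _ _)
    _ = 2 ^ p * max |a| |b| ^ p := Real.mul_rpow zero_le_two (le_max_of_le_left (abs_nonneg a))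
    _ ≤ 2 ^ p * (|a| ^ p + |b| ^ p) := by
        gcongr
        exact rpow_max_le_add hp (abs_nonneg a) (abs_nonneg b)

lemma exists_mul_rpow_one_div_le {c : ℝ} (hp : 1 < p) (hc : 0 ≤ c) :
    ∃ D, ∀ x, 0 ≤ x → c * x ^ (1 / p) ≤ x / 2 + D := by
  -- with `y = x ^ (1 / p)`: `c * y ≤ y ^ p / 2` as soon as `y ≥ M`
  set M := (2 * c) ^ (p - 1)⁻¹
  refine ⟨c * M, fun x hx => ?_⟩
  set y := x ^ (1 / p) with hy
  have hy0 : 0 ≤ y := by positivity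
  have hxy : x = y ^ p := by rw [hy, one_div, Real.rpow_inv_rpow hx (by linarith)]
  rcases le_total y M with hyM | hMy
  · nlinarith [mul_le_mul_of_nonneg_left hyM hc]
  · have h2c : 2 * c ≤ y ^ (p - 1) := by
      calc 2 * c = M ^ (p - 1) := (Real.rpow_inv_rpow (by linarith) (by linarith)).symm
        _ ≤ y ^ (p - 1) := by gcongr
    have : 2 * c * y ≤ x := by
      rw [hxy, ← rpow_sub_one_mul_self hy0 (by linarith : p ≠ 0)]
      exact mul_le_mul_of_nonneg_right h2c hy0
    nlinarith [mul_nonneg hc (show 0 ≤ M by positivity)]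

lemma abs_mul_self_le_of_growth {g : ℝ → ℝ} {q a ε δ : ℝ} (hp : 1 < p) (hq : p < q)
    (ha : 0 ≤ a) (hε : 0 ≤ ε) (hδ : 0 < δ) (hga : ∀ t, |g t| ≤ a * (1 + |t| ^ (q - 1)))
    (hgδ : ∀ t, |t| < δ → |g t| ≤ ε * |t| ^ (p - 1)) (t : ℝ) :
    |g t * t| ≤ ε * |t| ^ p + a * (δ ^ (1 - q) + 1) * |t| ^ q := by
  rw [abs_mul]
  rcases lt_or_ge |t| δ with hsmall | hlarge
  · calc |g t| * |t| ≤ ε * |t| ^ (p - 1) * |t| := by gcongr; exact hgδ t hsmall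
      _ = ε * |t| ^ p := by rw [mul_assoc, rpow_sub_one_mul_self (abs_nonneg t) (by linarith)]
      _ ≤ _ := le_add_of_nonneg_right (by positivity)
  · have ht : 0 < |t| := hδ.trans_le hlarge
    have hlin : |t| ≤ δ ^ (1 - q) * |t| ^ q :=
      calc |t| = |t| ^ (1 - q) * |t| ^ q := by rw [← Real.rpow_add ht]; norm_num
        _ ≤ δ ^ (1 - q) * |t| ^ q := mul_le_mul_of_nonneg_right
          (Real.rpow_le_rpow_of_nonpos hδ hlarge (by linarith)) (by positivity)
    calc |g t| * |t| ≤ a * (1 + |t| ^ (q - 1)) * |t| := by gcongr; exact hga t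
      _ = a * |t| + a * |t| ^ q := by
        rw [← rpow_sub_one_mul_self (abs_nonneg t) (by linarith : q ≠ 0)]; ring
      _ ≤ a * (δ ^ (1 - q) * |t| ^ q) + a * |t| ^ q := by gcongr
      _ = a * (δ ^ (1 - q) + 1) * |t| ^ q := by ring
      _ ≤ _ := le_add_of_nonneg_left (by positivity)

lemma summable_abs_rpow_of_le {ι : Type*} {q : ℝ} {u : ι → ℝ} (hp : 0 < p) (hpq : p ≤ q)
    (hu : Summable fun x => |u x| ^ p) : Summable fun x => |u x| ^ q := by
  have hq : 0 < q := hp.trans_le hpq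
  have hmem : Memℓp u (ENNReal.ofReal p) :=
    (memℓp_gen_iff (by rwa [ENNReal.toReal_ofReal hp.le])).2 (by simpa [hp.le] using hu)
  simpa [hq.le] using (memℓp_gen_iff (by rwa [ENNReal.toReal_ofReal hq.le])).1
    (hmem.of_exponent_ge (ENNReal.ofReal_le_ofReal hpq))

end RealInequalities

section Lattice

variable {N : ℕ}

lemma LatAdj.symm {x y : Vtx N} (h : LatAdj x y) : LatAdj y x := by
  unfold LatAdj at *
  simpa only [abs_sub_comm] using h

def unitBox (x : Vtx N) : Finset (Vtx N) :=
  Fintype.piFinset fun i => Finset.Icc (x i - 1) (x i + 1)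

lemma LatAdj.mem_unitBox {x y : Vtx N} (h : LatAdj x y) : y ∈ unitBox x := by
  simp only [unitBox, Fintype.mem_piFinset, Finset.mem_Icc]
  intro i
  have hi : |x i - y i| ≤ 1 :=
    h ▸ Finset.single_le_sum (f := fun j => |x j - y j|) (fun j _ => abs_nonneg _)
      (Finset.mem_univ i)
  constructor <;> linarith [abs_le.1 hi]

lemma card_unitBox (x : Vtx N) : (unitBox x).card = 3 ^ N := by
  have h3 : ∀ a : ℤ, (a + 1 + 1 - (a - 1)).toNat = 3 := fun a => by omega
  simp [unitBox, Fintype.card_piFinset, Int.card_Icc, h3]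

def edgeTail (h : Vtx N → ℝ) (z : Vtx N × Vtx N) : ℝ := if LatAdj z.1 z.2 then h z.1 else 0

lemma edgeTail_swap (h : Vtx N → ℝ) (z : Vtx N × Vtx N) :
    edgeTail h z.swap = if LatAdj z.1 z.2 then h z.2 else 0 := by
  by_cases hz : LatAdj z.1 z.2
  · simp [edgeTail, hz, hz.symm]
  · simp [edgeTail, hz, show ¬LatAdj z.2 z.1 from fun h' => hz h'.symm]

variable {h : Vtx N → ℝ}

lemma summable_edgeTail_and_tsum_le (h0 : 0 ≤ h) (hs : Summable h) :
    Summable (edgeTail h) ∧ ∑' z, edgeTail h z ≤ 3 ^ N * ∑' x, h x := by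
  have hE0 : 0 ≤ edgeTail h := fun z => by
    unfold edgeTail; split_ifs; exacts [h0 _, le_rfl]
  have hoff : ∀ x, ∀ y ∉ unitBox x, edgeTail h (x, y) = 0 := fun x y hy =>
    if_neg fun hxy : LatAdj x y => hy hxy.mem_unitBox
  have hfiber : ∀ x, ∑' y, edgeTail h (x, y) ≤ 3 ^ N * h x := by
    intro x
    rw [tsum_eq_sum (hoff x)]
    calc ∑ y ∈ unitBox x, edgeTail h (x, y) ≤ ∑ _y ∈ unitBox x, h x :=
          Finset.sum_le_sum fun y _ => by unfold edgeTail; split_ifs; exacts [le_rfl, h0 _]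
      _ = 3 ^ N * h x := by rw [Finset.sum_const, card_unitBox, nsmul_eq_mul]; norm_cast
  have hfiberS : ∀ x, Summable fun y => edgeTail h (x, y) := fun x =>
    summable_of_ne_finset_zero (hoff x)
  have hS : Summable (edgeTail h) := (summable_prod_of_nonneg hE0).2
    ⟨hfiberS, (hs.mul_left _).of_nonneg_of_le (fun x => tsum_nonneg fun y => hE0 _) hfiber⟩
  refine ⟨hS, ?_⟩
  rw [hS.tsum_prod' hfiberS, ← tsum_mul_left]
  exact Summable.tsum_le_tsum hfiber hS.prod (hs.mul_left _)

lemma summable_and_abs_tsum_adj_le (h0 : 0 ≤ h) (hs : Summable h) {g : Vtx N × Vtx N → ℝ}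
    (hg : ∀ z, LatAdj z.1 z.2 → |g z| ≤ h z.1 + h z.2) :
    Summable (fun z => if LatAdj z.1 z.2 then g z else 0) ∧
      |∑' z, if LatAdj z.1 z.2 then g z else 0| ≤ 2 * 3 ^ N * ∑' x, h x := by
  set w : Vtx N × Vtx N → ℝ := fun z => if LatAdj z.1 z.2 then g z else 0
  have hw : ∀ z, |w z| ≤ edgeTail h z + edgeTail h z.swap := fun z => by
    rw [edgeTail_swap]
    simp only [w, edgeTail]
    split_ifs with hz
    exacts [hg z hz, by simp]
  obtain ⟨hS, hle⟩ := summable_edgeTail_and_tsum_le h0 hs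
  have hSswap : Summable fun z : Vtx N × Vtx N => edgeTail h z.swap :=
    hS.comp_injective Prod.swap_injective
  have hw' : Summable w := Summable.of_norm_bounded (hS.add hSswap) hw
  refine ⟨hw', ?_⟩
  calc |∑' z, w z| ≤ ∑' z, |w z| := by
        simpa only [Real.norm_eq_abs] using norm_tsum_le_tsum_norm hw'.norm
    _ ≤ ∑' z, (edgeTail h z + edgeTail h z.swap) := hw'.abs.tsum_le_tsum hw (hS.add hSswap)
    _ = 2 * ∑' z, edgeTail h z := by
        have hswap : ∑' z : Vtx N × Vtx N, edgeTail h z.swap = ∑' z, edgeTail h z :=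
          (Equiv.prodComm _ _).tsum_eq (edgeTail h)
        rw [hS.tsum_add hSswap, hswap, two_mul]
    _ ≤ 2 * 3 ^ N * ∑' x, h x := by rw [mul_assoc]; gcongr

lemma exists_pos_le_of_periodic {T : ℕ} (hT : 0 < T) {V : Vtx N → ℝ}
    (hper : ∀ x (i : Fin N), V (x + (T : ℤ) • Pi.single i 1) = V x) (hpos : ∀ x, 0 < V x) :
    ∃ V₁ > 0, ∀ x, V₁ ≤ V x := by
  have hT' : (0 : ℤ) < T := by exact_mod_cast hT
  set R : Finset (Vtx N) := Fintype.piFinset fun _ => Finset.Ico 0 (T : ℤ)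
  obtain ⟨y₀, -, hy₀⟩ := R.exists_min_image V ⟨0, by simp [R, hT]⟩
  refine ⟨V y₀, hpos y₀, fun x => ?_⟩
  have hperiodic : Function.Periodic V (∑ i, (x i / T) • ((T : ℤ) • Pi.single i 1)) :=
    Finset.sum_induction _ (Function.Periodic V) (fun _ _ h₁ h₂ => h₁.add_period h₂)
      (fun y => by simp) fun i _ => Function.Periodic.zsmul (hper · i) _
  have hx : x = (fun i => x i % T) + ∑ i, (x i / T) • ((T : ℤ) • Pi.single i 1) := by
    ext j
    simp [Finset.sum_apply, Pi.single_apply, Int.emod_add_ediv_mul]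
  have hmem : (fun i => x i % (T : ℤ)) ∈ R := by
    simp only [R, Fintype.mem_piFinset, Finset.mem_Ico]
    exact fun i => ⟨Int.emod_nonneg _ hT'.ne', Int.emod_lt_of_pos _ hT'⟩
  rw [hx, hperiodic]
  exact hy₀ _ hmem

end Lattice

section Functional

variable {N : ℕ} {p : ℝ}

lemma gradPair_self (hp : 1 < p) (u : Vtx N → ℝ) : gradPair N p u u = pEnergy N p u := by
  unfold gradPair pEnergy
  congr 1
  refine tsum_congr fun z => ?_
  rw [abs_rpow_sub_two_mul_self_mul_self hp, abs_sub_comm]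

lemma eNormP_eq_tsum_of_phiDeriv_self_eq_zero (hp : 1 < p) {V : Vtx N → ℝ}
    {f : Vtx N → ℝ → ℝ} {u : Vtx N → ℝ} (h : PhiDeriv N p V f u u = 0) :
    eNormP N p V u = ∑' x, f x (u x) * u x := by
  have hpot : ∑' x, V x * |u x| ^ (p - 2) * u x * u x = ∑' x, V x * |u x| ^ p :=
    tsum_congr fun x => by rw [mul_assoc, mul_assoc, ← mul_assoc (|u x| ^ _),
      abs_rpow_sub_two_mul_self_mul_self hp]
  rw [PhiDeriv, gradPair_self hp, hpot] at h
  rw [eNormP]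
  linarith

lemma pEnergy_nonneg (u : Vtx N → ℝ) : 0 ≤ pEnergy N p u := by
  unfold pEnergy
  refine mul_nonneg (by norm_num) (tsum_nonneg fun z => ?_)
  split_ifs <;> positivity

lemma eNormP_nonneg {V : Vtx N → ℝ} (hV : ∀ x, 0 ≤ V x) (u : Vtx N → ℝ) :
    0 ≤ eNormP N p V u :=
  add_nonneg (pEnergy_nonneg u) (tsum_nonneg fun x => mul_nonneg (hV x) (by positivity))

lemma pEnergy_le (hp : 0 ≤ p) {u : Vtx N → ℝ} (hu : memE N p u) :
    pEnergy N p u ≤ 3 ^ N * 2 ^ p * ∑' x, |u x| ^ p := by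
  obtain ⟨-, hle⟩ := summable_and_abs_tsum_adj_le (h := fun x => 2 ^ p * |u x| ^ p)
    (fun x => by positivity) (hu.mul_left _) (g := fun z => |u z.1 - u z.2| ^ p)
    fun z _ => by rw [abs_of_nonneg (by positivity), ← mul_add]; exact abs_sub_rpow_le hp _ _
  rw [tsum_mul_left] at hle
  unfold pEnergy
  linarith [le_abs_self (∑' z : Vtx N × Vtx N,
    if LatAdj z.1 z.2 then |u z.1 - u z.2| ^ p else 0)]

lemma abs_gradPair_le (hp : 1 < p) {u v : Vtx N → ℝ} (hu : memE N p u) (hv : memE N p v) :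
    |gradPair N p u v| ≤ 3 ^ N * 2 ^ p * (∑' x, |u x| ^ p + ∑' x, |v x| ^ p) := by
  have hbound : ∀ a b c d : ℝ, |(|a - b| ^ (p - 2) * (a - b) * (c - d))| ≤
      (2 ^ p * |a| ^ p + 2 ^ p * |c| ^ p) + (2 ^ p * |b| ^ p + 2 ^ p * |d| ^ p) := by
    intro a b c d
    rw [abs_mul, abs_abs_rpow_sub_two_mul hp]
    linarith [rpow_sub_one_mul_le_add hp (abs_nonneg (a - b)) (abs_nonneg (c - d)),
      abs_sub_rpow_le (p := p) (by linarith) a b, abs_sub_rpow_le (p := p) (by linarith) c d]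
  obtain ⟨-, hle⟩ := summable_and_abs_tsum_adj_le
    (h := fun x => 2 ^ p * |u x| ^ p + 2 ^ p * |v x| ^ p)
    (fun x => by positivity) ((hu.mul_left _).add (hv.mul_left _))
    (g := fun z => |u z.2 - u z.1| ^ (p - 2) * (u z.2 - u z.1) * (v z.2 - v z.1))
    fun z _ => by linarith [hbound (u z.2) (u z.1) (v z.2) (v z.1)]
  rw [(hu.mul_left _).tsum_add (hv.mul_left _), tsum_mul_left, tsum_mul_left] at hle
  rw [gradPair, abs_mul, abs_of_pos (by norm_num : (0 : ℝ) < 1 / 2)]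
  linarith

end Functional

section Potential

variable {N : ℕ} {p : ℝ}

lemma tsum_mul_indicator_finset (F : Finset (Vtx N)) (g u : Vtx N → ℝ) :
    ∑' x, g x * (F : Set (Vtx N)).indicator u x = ∑ x ∈ F, g x * u x := by
  rw [tsum_eq_sum (s := F) fun x hx => by simp [hx]]
  exact Finset.sum_congr rfl fun x hx => by simp [hx]

lemma summable_potential_of_abs_phiDeriv_le (hp : 1 < p) {V : Vtx N → ℝ}
    {f : Vtx N → ℝ → ℝ} {u : Vtx N → ℝ} {c : ℝ} (hV : ∀ x, 0 ≤ V x) (hu : memE N p u)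
    (hfu : Summable fun x => |f x (u x) * u x|)
    (hPS : ∀ v, memE N p v → |PhiDeriv N p V f u v| ≤ c * eNorm N p V v) :
    Summable fun x => V x * |u x| ^ p := by
  have hp0 : 0 < p := by linarith
  set S := ∑' x, |u x| ^ p
  set A := 3 ^ N * 2 ^ p * (2 * S)
  set K := ∑' x, |f x (u x) * u x|
  have hA : 0 ≤ A := by positivity
  obtain ⟨D, hD⟩ := exists_mul_rpow_one_div_le hp (abs_nonneg c)
  refine summable_of_sum_le (c := 3 * A + 2 * D + 2 * K)
    (fun x => mul_nonneg (hV x) (by positivity)) fun F => ?_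
  set v := (F : Set (Vtx N)).indicator u
  set t := ∑ x ∈ F, V x * |u x| ^ p
  have hvp : ∀ x, |v x| ^ p = (F : Set (Vtx N)).indicator (fun x => |u x| ^ p) x :=
    fun x => by by_cases hx : x ∈ F <;> simp [v, hx, Real.zero_rpow hp0.ne']
  have hv : memE N p v := summable_of_ne_finset_zero (s := F) fun x hx => by simp [hvp, hx]
  have hvS : ∑' x, |v x| ^ p ≤ S := hv.tsum_le_tsum (fun x => by
    rw [hvp]; exact Set.indicator_le_self' (fun x _ => by positivity) x) hu
  have hvS0 : 0 ≤ ∑' x, |v x| ^ p := tsum_nonneg fun x => by positivity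
  have hPhi : PhiDeriv N p V f u v = gradPair N p u v + t - ∑ x ∈ F, f x (u x) * u x := by
    have hpot : ∑' x, V x * |u x| ^ (p - 2) * u x * v x = t := by
      rw [tsum_mul_indicator_finset]
      exact Finset.sum_congr rfl fun x _ => by
        rw [mul_assoc, mul_assoc, ← mul_assoc (|u x| ^ _),
          abs_rpow_sub_two_mul_self_mul_self hp]
    rw [PhiDeriv, hpot, tsum_mul_indicator_finset]
  have hgrad : |gradPair N p u v| ≤ A :=
    (abs_gradPair_le hp hu hv).trans (mul_le_mul_of_nonneg_left (by linarith) (by positivity))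
  have hEv : eNormP N p V v ≤ A + t := by
    have hpot : ∑' x, V x * |v x| ^ p = t := by
      simp only [hvp]
      exact tsum_mul_indicator_finset F V _
    have : pEnergy N p v ≤ A := (pEnergy_le hp0.le hv).trans
      (mul_le_mul_of_nonneg_left (by linarith) (by positivity))
    rw [eNormP, hpot]
    linarith
  have hFK : |∑ x ∈ F, f x (u x) * u x| ≤ K :=
    (Finset.abs_sum_le_sum_abs _ _).trans (hfu.sum_le_tsum F fun x _ => abs_nonneg _)
  have ht : 0 ≤ t := Finset.sum_nonneg fun x _ => mul_nonneg (hV x) (by positivity)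
  have hnorm : eNorm N p V v ≤ (A + t) ^ (1 / p) :=
    Real.rpow_le_rpow (eNormP_nonneg hV v) hEv (by positivity)
  have hPSv : PhiDeriv N p V f u v ≤ |c| * (A + t) ^ (1 / p) :=
    calc PhiDeriv N p V f u v ≤ c * eNorm N p V v := (le_abs_self _).trans (hPS v hv)
      _ ≤ |c| * eNorm N p V v :=
        mul_le_mul_of_nonneg_right (le_abs_self c) (Real.rpow_nonneg (eNormP_nonneg hV v) _)
      _ ≤ |c| * (A + t) ^ (1 / p) := by gcongr
  -- `t ≤ |c| (A + t) ^ (1 / p) + A + K ≤ (A + t) / 2 + D + A + K`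
  linarith [hD (A + t) (by positivity), abs_le.1 hgrad, abs_le.1 hFK]

end Potential

lemma eNormP_le_of_mem_Nehari {N : ℕ} {p q : ℝ} (hp : 1 < p) (hq : p < q) {V : Vtx N → ℝ}
    {f : Vtx N → ℝ → ℝ} {u : Vtx N → ℝ} {V₁ C c : ℝ} (hV₁ : 0 ≤ V₁) (hV : ∀ x, V₁ ≤ V x)
    (hf : ∀ x t, |f x t * t| ≤ V₁ / 2 * |t| ^ p + C * |t| ^ q) (hu : u ∈ Nehari N p V f)
    (hPS : ∀ v, memE N p v → |PhiDeriv N p V f u v| ≤ c * eNorm N p V v) :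
    eNormP N p V u ≤ 2 * C * ∑' x, |u x| ^ q := by
  obtain ⟨hE, -, hNeh⟩ := hu
  have hQ : Summable fun x => |u x| ^ q := summable_abs_rpow_of_le (by linarith) hq.le hE
  have hbound : Summable fun x => V₁ / 2 * |u x| ^ p + C * |u x| ^ q :=
    (hE.mul_left _).add (hQ.mul_left _)
  have hfu : Summable fun x => |f x (u x) * u x| :=
    hbound.of_nonneg_of_le (fun _ => abs_nonneg _) fun x => hf x (u x)
  have hpot : Summable fun x => V x * |u x| ^ p :=
    summable_potential_of_abs_phiDeriv_le hp (fun x => hV₁.trans (hV x)) hE hfu hPS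
  have hupper : eNormP N p V u ≤ V₁ / 2 * ∑' x, |u x| ^ p + C * ∑' x, |u x| ^ q := by
    rw [eNormP_eq_tsum_of_phiDeriv_self_eq_zero hp hNeh, ← tsum_mul_left, ← tsum_mul_left,
      ← (hE.mul_left _).tsum_add (hQ.mul_left _)]
    exact hfu.of_abs.tsum_le_tsum (fun x => (le_abs_self _).trans (hf x (u x))) hbound
  have hlower : V₁ * ∑' x, |u x| ^ p ≤ eNormP N p V u :=
    calc V₁ * ∑' x, |u x| ^ p = ∑' x, V₁ * |u x| ^ p := tsum_mul_left.symm
      _ ≤ ∑' x, V x * |u x| ^ p := (hE.mul_left _).tsum_le_tsum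
          (fun x => mul_le_mul_of_nonneg_right (hV x) (by positivity)) hpot
      _ ≤ eNormP N p V u := le_add_of_nonneg_left (pEnergy_nonneg u)
  linarith

theorem stmt_19_general (N : ℕ) (p q : ℝ) (hp : 1 < p) (hq : p < q)
    (V : Vtx N → ℝ) (f : Vtx N → ℝ → ℝ) (T : ℕ) (hT : 0 < T)
    (hA1 : ∃ a : ℝ, 0 < a ∧ ∀ x u, |f x u| ≤ a * (1 + |u| ^ (q - 1)))
    (hA2V : ∀ x (i : Fin N), V (x + (T : ℤ) • Pi.single i 1) = V x)
    (hVpos : ∀ x, 0 < V x)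
    (hA3 : ∀ ε > (0:ℝ), ∃ δ > (0:ℝ), ∀ x u, |u| < δ → |f x u| ≤ ε * |u| ^ (p - 1))
    (u : ℕ → (Vtx N → ℝ)) (hmem : ∀ n, u n ∈ Nehari N p V f)
    (ε : ℕ → ℝ)
    (hPS : ∀ n, ∀ v : Vtx N → ℝ, memE N p v →
      |PhiDeriv N p V f (u n) v| ≤ ε n * eNorm N p V v)
    (hq0 : Tendsto (fun n => ∑' x, |u n x| ^ q) atTop (𝓝 0)) :
    Tendsto (fun n => eNorm N p V (u n)) atTop (𝓝 0) ∧
    ((∃ δ > (0:ℝ), ∀ v ∈ Nehari N p V f, δ ≤ eNorm N p V v) → False) := by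
  obtain ⟨V₁, hV₁, hV⟩ := exists_pos_le_of_periodic hT hA2V hVpos
  obtain ⟨a, ha, hfa⟩ := hA1
  obtain ⟨δ, hδ, hfδ⟩ := hA3 (V₁ / 2) (by positivity)
  have hf : ∀ x t, |f x t * t| ≤ V₁ / 2 * |t| ^ p + a * (δ ^ (1 - q) + 1) * |t| ^ q :=
    fun x => abs_mul_self_le_of_growth hp hq ha.le (by positivity) hδ (hfa x) (hfδ x)
  have hnormP : Tendsto (fun n => eNormP N p V (u n)) atTop (𝓝 0) := by
    refine squeeze_zero (fun n => eNormP_nonneg (fun x => (hVpos x).le) _)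
      (fun n => eNormP_le_of_mem_Nehari hp hq hV₁.le hV hf (hmem n) (hPS n)) ?_
    simpa using hq0.const_mul (2 * (a * (δ ^ (1 - q) + 1)))
  have hnorm : Tendsto (fun n => eNorm N p V (u n)) atTop (𝓝 0) := by
    have := hnormP.rpow_const (p := 1 / p) (Or.inr (by positivity))
    rwa [Real.zero_rpow (by positivity)] at this
  refine ⟨hnorm, fun ⟨δ', hδ', hle⟩ => ?_⟩
  exact hδ'.not_ge (ge_of_tendsto' hnorm fun n => hle _ (hmem n))

/-- if the derivative of Phi along u_n tends to 0 and u_n tends to 0 in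
the q-norm then the E-norm of u_n tends to 0; consequently a Palais-Smale sequence in
the Nehari manifold cannot converge to 0 in the q-norm. -/
theorem stmt_19 (N : ℕ) (p q : ℝ) (hp : 1 < p) (hq : p < q)
    (V : Vtx N → ℝ) (f : Vtx N → ℝ → ℝ) (T : ℕ) (hT : 0 < T)
    (hA1 : ∃ a : ℝ, 0 < a ∧ ∀ x u, |f x u| ≤ a * (1 + |u| ^ (q - 1)))
    (hfc : ∀ x, Continuous (f x))
    (hA2V : ∀ x (i : Fin N), V (x + (T : ℤ) • Pi.single i 1) = V x)
    (hA2f : ∀ x (i : Fin N) (u : ℝ), f (x + (T : ℤ) • Pi.single i 1) u = f x u)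
    (hVpos : ∀ x, 0 < V x)
    (hA3 : ∀ ε > (0:ℝ), ∃ δ > (0:ℝ), ∀ x u, |u| < δ → |f x u| ≤ ε * |u| ^ (p - 1))
    (hA4 : ∀ x, StrictMonoOn (fun u => f x u / |u| ^ (p - 1)) (Set.Iio 0) ∧
               StrictMonoOn (fun u => f x u / |u| ^ (p - 1)) (Set.Ioi 0))
    (hA5 : ∀ M : ℝ, ∃ R > (0:ℝ), ∀ x u, R ≤ |u| → M ≤ Fprim f x u / |u| ^ p)
    (u : ℕ → (Vtx N → ℝ)) (hmem : ∀ n, u n ∈ Nehari N p V f)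
    (ε : ℕ → ℝ) (hε : Tendsto ε atTop (𝓝 0))
    (hPS : ∀ n, ∀ v : Vtx N → ℝ, memE N p v →
      |PhiDeriv N p V f (u n) v| ≤ ε n * eNorm N p V v)
    (hq0 : Tendsto (fun n => ∑' x, |u n x| ^ q) atTop (𝓝 0)) :
    Tendsto (fun n => eNorm N p V (u n)) atTop (𝓝 0) ∧
    ((∃ δ > (0:ℝ), ∀ v ∈ Nehari N p V f, δ ≤ eNorm N p V v) → False) :=
  stmt_19_general N p q hp hq V f T hT hA1 hA2V hVpos hA3 u hmem ε hPS hq0
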